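/- For every x ∈ ℝ^n, G ∈ ℝ^n, ρ > 0 and ξ ∈ (0,1): θ(x) ≤ φ_ρ(x; G)/(ξ·ρ) + ‖G‖/((1 − ξ)·ρ). (Here θ(x) ≥ 0 and φ_ρ(x; G) ≥ 0 always hold.) -/

import Mathlib

open scoped RealInnerProductSpace

/-- The criticality measure θ(x) = ‖c(x)‖ − min_{‖s‖≤1} ‖c(x) + J(x)s‖. -/
noncomputable def thetaMeasure {n q : ℕ}
    (c : EuclideanSpace ℝ (Fin n) → EuclideanSpace ℝ (Fin q))
    (J : EuclideanSpace ℝ (Fin n) → EuclideanSpace ℝ (Fin n) →L[ℝ] EuclideanSpace ℝ (Fin q))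
    (x : EuclideanSpace ℝ (Fin n)) : ℝ :=
  ‖c x‖ - sInf ((fun s => ‖c x + J x s‖) '' Metric.closedBall 0 1)

/-- φ_ρ(x; G) = ρ‖c(x)‖ − min_{‖s‖≤1} (⟨G, s⟩ + ρ‖c(x) + J(x)s‖). -/
noncomputable def phiMeasure {n q : ℕ}
    (c : EuclideanSpace ℝ (Fin n) → EuclideanSpace ℝ (Fin q))
    (J : EuclideanSpace ℝ (Fin n) → EuclideanSpace ℝ (Fin n) →L[ℝ] EuclideanSpace ℝ (Fin q))
    (x G : EuclideanSpace ℝ (Fin n)) (ρ : ℝ) : ℝ :=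
  ρ * ‖c x‖ - sInf ((fun s => ⟪G, s⟫ + ρ * ‖c x + J x s‖) '' Metric.closedBall 0 1)

/-! The step `s₀` minimising `‖c x + J x s‖` over the unit ball gives `ρ θ(x) ≤ φ_ρ(x; G) + ‖G‖`,
since `⟪G, s₀⟫ ≤ ‖G‖`. The claimed bound splits `φ_ρ + ‖G‖` with the weights `1/ξ, 1/(1 - ξ) ≥ 1`;
both measures are nonnegative because `s = 0` is feasible. -/

open Metric Set

section UnitBall

variable {E : Type*} [SeminormedAddCommGroup E] [ProperSpace E] {f : E → ℝ}

theorem sInf_image_closedBall_le (hf : Continuous f) {s : E} (hs : ‖s‖ ≤ 1) :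
    sInf (f '' closedBall 0 1) ≤ f s :=
  csInf_le ((isCompact_closedBall 0 1).bddBelow_image hf.continuousOn)
    (mem_image_of_mem f (mem_closedBall_zero_iff.2 hs))

theorem exists_sInf_image_closedBall_eq (hf : Continuous f) :
    ∃ s : E, ‖s‖ ≤ 1 ∧ sInf (f '' closedBall 0 1) = f s := by
  obtain ⟨s, hs, hmin⟩ := (isCompact_closedBall (0 : E) 1).exists_sInf_image_eq
    (nonempty_closedBall.2 zero_le_one) hf.continuousOn
  exact ⟨s, mem_closedBall_zero_iff.1 hs, hmin⟩

end UnitBall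

section Measures

variable {n q : ℕ} (c : EuclideanSpace ℝ (Fin n) → EuclideanSpace ℝ (Fin q))
  (J : EuclideanSpace ℝ (Fin n) → EuclideanSpace ℝ (Fin n) →L[ℝ] EuclideanSpace ℝ (Fin q))
  (x G : EuclideanSpace ℝ (Fin n)) (ρ : ℝ)

theorem thetaMeasure_nonneg : 0 ≤ thetaMeasure c J x := by
  have h := sInf_image_closedBall_le (f := fun s => ‖c x + J x s‖) (by fun_prop)
    (norm_zero.le.trans zero_le_one)
  simp only [map_zero, add_zero] at h
  exact sub_nonneg.2 h

theorem phiMeasure_nonneg : 0 ≤ phiMeasure c J x G ρ := by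
  have h := sInf_image_closedBall_le (f := fun s => ⟪G, s⟫ + ρ * ‖c x + J x s‖) (by fun_prop)
    (norm_zero.le.trans zero_le_one)
  simp only [map_zero, add_zero, inner_zero_right, zero_add] at h
  exact sub_nonneg.2 h

theorem mul_thetaMeasure_le_phiMeasure_add_norm :
    ρ * thetaMeasure c J x ≤ phiMeasure c J x G ρ + ‖G‖ := by
  obtain ⟨s₀, hs₀, hmin⟩ :=
    exists_sInf_image_closedBall_eq (f := fun s => ‖c x + J x s‖) (by fun_prop)
  have hφ := sInf_image_closedBall_le (f := fun s => ⟪G, s⟫ + ρ * ‖c x + J x s‖)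
    (by fun_prop) hs₀
  have hG : ⟪G, s₀⟫ ≤ ‖G‖ := calc
    ⟪G, s₀⟫ ≤ ‖G‖ * ‖s₀‖ := real_inner_le_norm G s₀
    _ ≤ ‖G‖ := mul_le_of_le_one_right (norm_nonneg G) hs₀
  rw [thetaMeasure, phiMeasure, hmin]
  linarith

end Measures

theorem stmt_11 {n q : ℕ}
    (c : EuclideanSpace ℝ (Fin n) → EuclideanSpace ℝ (Fin q))
    (J : EuclideanSpace ℝ (Fin n) → EuclideanSpace ℝ (Fin n) →L[ℝ] EuclideanSpace ℝ (Fin q))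
    (x G : EuclideanSpace ℝ (Fin n)) (ρ ξ : ℝ) (hρ : 0 < ρ) (hξ : ξ ∈ Set.Ioo (0 : ℝ) 1) :
    thetaMeasure c J x ≤ phiMeasure c J x G ρ / (ξ * ρ) + ‖G‖ / ((1 - ξ) * ρ) ∧
      0 ≤ thetaMeasure c J x ∧ 0 ≤ phiMeasure c J x G ρ := by
  obtain ⟨hξ0, hξ1⟩ := hξ
  have hφ := phiMeasure_nonneg c J x G ρ
  refine ⟨?_, thetaMeasure_nonneg c J x, hφ⟩
  have hφξ : phiMeasure c J x G ρ / ρ ≤ phiMeasure c J x G ρ / (ξ * ρ) :=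
    div_le_div_of_nonneg_left hφ (by positivity) (mul_le_of_le_one_left hρ.le hξ1.le)
  have hGξ : ‖G‖ / ρ ≤ ‖G‖ / ((1 - ξ) * ρ) :=
    div_le_div_of_nonneg_left (norm_nonneg G) (mul_pos (by linarith) hρ)
      (mul_le_of_le_one_left hρ.le (by linarith))
  have hθ : thetaMeasure c J x ≤ (phiMeasure c J x G ρ + ‖G‖) / ρ :=
    (le_div_iff₀' hρ).2 (mul_thetaMeasure_le_phiMeasure_add_norm c J x G ρ)
  rw [add_div] at hθ
  linarith
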